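/- Let 𝔛=(X,{R_i}_{i=0}^d) be a commutative association scheme generated by a non-symmetric relation R_1 satisfying R_1^2 ⊆ {R_1,R_{1*},R_2}, R_1R_{1*} ⊆ {R_0,R_1,R_{1*},R_2,R_{2*}}, and 2 ∉ {1*,2*}, with k_1 = k_2 > 1, and set I := {i : R_i ∈ R_1^2} and J := {i : R_i ∈ R_1R_{1*}}. If |I| = 3 (i.e. I = {1,1*,2}), then J = {0,1,1*,2,2*} and p_{1,1}^2 ≠ p_{1,1*}^2. -/
import Mathlib

structure AssocScheme (X : Type*) [Fintype X] (d : ℕ) where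
  R : Fin (d + 1) → X → X → Prop
  star : Fin (d + 1) → Fin (d + 1)
  p : Fin (d + 1) → Fin (d + 1) → Fin (d + 1) → ℕ
  R_nonempty : ∀ i, ∃ x y, R i x y
  R_diag : ∀ x y, R 0 x y ↔ x = y
  R_partition : ∀ x y, ∃! i, R i x y
  R_star : ∀ i x y, R i x y ↔ R (star i) y x
  p_count : ∀ i j l x y, R l x y →
    p i j l = Set.ncard {z | R i x z ∧ R (star j) y z}

namespace AssocScheme

variable {X : Type*} [Fintype X] {d : ℕ}

/-- The valency `kᵢ = p_{i,i*}^0` of the relation `Rᵢ`. -/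
def valency (A : AssocScheme X d) (i : Fin (d + 1)) : ℕ := A.p i (A.star i) 0

/-- A scheme is commutative if `p_{i,j}^l = p_{j,i}^l` for all `i,j,l`. -/
def IsCommutative (A : AssocScheme X d) : Prop := ∀ i j l, A.p i j l = A.p j i l

/-- The index set of the complex product `Rᵢ Rⱼ`, i.e. `{l | p_{i,j}^l ≠ 0}`. -/
def prodIdx (A : AssocScheme X d) (i j : Fin (d + 1)) : Set (Fin (d + 1)) :=
  {l | A.p i j l ≠ 0}

/-- A set of relations (given by its index set) is closed if it is closed
under `R_{i*} R_j`. -/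
def IsClosed (A : AssocScheme X d) (F : Set (Fin (d + 1))) : Prop :=
  ∀ i ∈ F, ∀ j ∈ F, ∀ l, A.p (A.star i) j l ≠ 0 → l ∈ F

/-- `Rⱼ` generates the scheme if the smallest closed subset containing `Rⱼ`
consists of all relations. -/
def Generates (A : AssocScheme X d) (j : Fin (d + 1)) : Prop :=
  ∀ F : Set (Fin (d + 1)), A.IsClosed F → j ∈ F → F = Set.univ

open Finset

variable (A : AssocScheme X d)

lemma star_star (i : Fin (d + 1)) : A.star (A.star i) = i := by
  obtain ⟨x, y, h⟩ := A.R_nonempty i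
  have h3 : A.R (A.star (A.star i)) x y := (A.R_star _ y x).1 ((A.R_star i x y).1 h)
  obtain ⟨l, -, hu⟩ := A.R_partition x y
  rw [hu _ h3, hu _ h]

lemma star_zero : A.star (0 : Fin (d + 1)) = 0 := by
  obtain ⟨x, y, h⟩ := A.R_nonempty 0
  obtain rfl : x = y := (A.R_diag x y).1 h
  have h2 : A.R (A.star 0) x x := (A.R_star 0 x x).1 h
  obtain ⟨l, -, hu⟩ := A.R_partition x x
  rw [hu _ h2, hu _ h]

lemma p_card {i j l : Fin (d + 1)} {x y : X} (h : A.R l x y) :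
    A.p i j l = {z | A.R i x z ∧ A.R j z y}.ncard := by
  rw [A.p_count i j l x y h]
  congr 1
  ext z
  exact and_congr_right fun _ => (A.R_star j z y).symm

lemma p_card' {i j l : Fin (d + 1)} {x y : X} (h : A.R l x y)
    (P : X → Prop) [DecidablePred P] (hP : ∀ z, P z ↔ (A.R i x z ∧ A.R j z y)) :
    (univ.filter P).card = A.p i j l := by
  rw [A.p_card h, ← Set.ncard_coe_finset]
  congr 1
  ext z
  simp [hP]

lemma deg (i : Fin (d + 1)) (x : X) (P : X → Prop) [DecidablePred P]
    (hP : ∀ z, P z ↔ A.R i x z) :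
    (univ.filter P).card = A.valency i := by
  have h0 : A.R 0 x x := (A.R_diag x x).2 rfl
  exact A.p_card' h0 P fun z => by
    rw [hP]
    exact ⟨fun h => ⟨h, (A.R_star i x z).1 h⟩, fun h => h.1⟩

lemma valency_star (i : Fin (d + 1)) : A.valency (A.star i) = A.valency i := by
  classical
  have key : ∑ x : X, (univ.filter fun z => A.R i x z).card
      = ∑ z : X, (univ.filter fun x => A.R i x z).card := by
    simp only [card_filter]
    exact Finset.sum_comm
  have h1 : ∀ x : X, (univ.filter fun z => A.R i x z).card = A.valency i :=
    fun x => A.deg i x _ fun z => Iff.rfl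
  have h2 : ∀ z : X, (univ.filter fun x => A.R i x z).card = A.valency (A.star i) :=
    fun z => A.deg (A.star i) z _ fun x => A.R_star i x z
  simp only [h1, h2, sum_const, smul_eq_mul, card_univ] at key
  have hX : 0 < Fintype.card X := by
    obtain ⟨x, -, -⟩ := A.R_nonempty 0
    exact Fintype.card_pos_iff.2 ⟨x⟩
  exact (Nat.eq_of_mul_eq_mul_left hX key).symm

lemma valency_zero : A.valency (0 : Fin (d + 1)) = 1 := by
  classical
  obtain ⟨x, -, -⟩ := A.R_nonempty 0
  have h := A.deg 0 x (fun z => x = z) fun z => (A.R_diag x z).symm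
  rw [← h]
  simp [Finset.filter_eq]

lemma p_transpose (i j l : Fin (d + 1)) :
    A.p i j l = A.p (A.star j) (A.star i) (A.star l) := by
  obtain ⟨x, y, h⟩ := A.R_nonempty l
  have h' : A.R (A.star l) y x := (A.R_star l x y).1 h
  rw [A.p_card h, A.p_card h']
  congr 1
  ext z
  simp only [Set.mem_setOf_eq]
  constructor
  · rintro ⟨h1, h2⟩
    exact ⟨(A.R_star j z y).1 h2, (A.R_star i x z).1 h1⟩
  · rintro ⟨h1, h2⟩
    exact ⟨(A.R_star i x z).2 h2, (A.R_star j z y).2 h1⟩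

lemma p_zero (i j : Fin (d + 1)) :
    A.p i j 0 = if j = A.star i then A.valency i else 0 := by
  obtain ⟨x, -, -⟩ := A.R_nonempty 0
  have h0 : A.R 0 x x := (A.R_diag x x).2 rfl
  by_cases hj : j = A.star i
  · rw [if_pos hj, hj]
    rfl
  · rw [if_neg hj, A.p_card h0]
    have : {z | A.R i x z ∧ A.R j z x} = ∅ := by
      ext z
      simp only [Set.mem_setOf_eq, Set.mem_empty_iff_false, iff_false, not_and]
      intro h1 h2
      obtain ⟨m, -, hu⟩ := A.R_partition z x
      exact hj ((hu _ h2).trans (hu _ ((A.R_star i x z).1 h1)).symm)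
    rw [this, Set.ncard_empty]

lemma p_id (i l : Fin (d + 1)) : A.p i 0 l = if i = l then 1 else 0 := by
  obtain ⟨x, y, h⟩ := A.R_nonempty l
  rw [A.p_card h]
  by_cases hi : i = l
  · subst hi
    rw [if_pos rfl]
    have : {z | A.R i x z ∧ A.R 0 z y} = {y} := by
      ext z
      simp only [Set.mem_setOf_eq, Set.mem_singleton_iff]
      constructor
      · rintro ⟨-, h2⟩
        exact (A.R_diag z y).1 h2
      · rintro rfl
        exact ⟨h, (A.R_diag z z).2 rfl⟩
    rw [this, Set.ncard_singleton]
  · rw [if_neg hi]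
    have : {z | A.R i x z ∧ A.R 0 z y} = ∅ := by
      ext z
      simp only [Set.mem_setOf_eq, Set.mem_empty_iff_false, iff_false, not_and]
      intro h1 h2
      obtain rfl : z = y := (A.R_diag z y).1 h2
      obtain ⟨m, -, hu⟩ := A.R_partition x z
      exact hi ((hu _ h1).trans (hu _ h).symm)
    rw [this, Set.ncard_empty]

noncomputable def cls (x y : X) : Fin (d + 1) := (A.R_partition x y).choose

lemma R_cls (x y : X) : A.R (A.cls x y) x y := (A.R_partition x y).choose_spec.1

lemma cls_eq_iff {l : Fin (d + 1)} {x y : X} : A.cls x y = l ↔ A.R l x y :=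
  ⟨fun h => h ▸ A.R_cls x y, fun h => ((A.R_partition x y).choose_spec.2 l h).symm⟩

lemma sum_p_mul_valency (i j : Fin (d + 1)) :
    ∑ l, A.valency l * A.p i j l = A.valency i * A.valency j := by
  classical
  obtain ⟨x, -, -⟩ := A.R_nonempty 0
  have lhs : ∑ l, A.valency l * A.p i j l = ∑ y : X, A.p i j (A.cls x y) := by
    rw [← Finset.sum_fiberwise' univ (fun y => A.cls x y) (fun l => A.p i j l)]
    refine Finset.sum_congr rfl fun l _ => ?_
    rw [Finset.sum_const, smul_eq_mul]
    congr 1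
    exact (A.deg l x _ fun y => A.cls_eq_iff).symm
  have mid : ∑ y : X, A.p i j (A.cls x y)
      = ∑ y : X, (univ.filter fun z => A.R i x z ∧ A.R j z y).card :=
    Finset.sum_congr rfl fun y _ => (A.p_card' (A.R_cls x y) _ fun z => Iff.rfl).symm
  have rhs : ∑ y : X, (univ.filter fun z => A.R i x z ∧ A.R j z y).card
      = A.valency i * A.valency j := by
    simp only [card_filter]
    rw [Finset.sum_comm]
    have step : ∀ z : X, (∑ y : X, if A.R i x z ∧ A.R j z y then 1 else 0)
        = if A.R i x z then A.valency j else 0 := by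
      intro z
      by_cases hz : A.R i x z
      · simp only [hz, true_and, if_true]
        rw [← card_filter]
        exact A.deg j z _ fun y => Iff.rfl
      · simp [hz]
    rw [Finset.sum_congr rfl fun z _ => step z, ← Finset.sum_filter,
      Finset.sum_const, smul_eq_mul]
    congr 1
    exact A.deg i x _ fun z => Iff.rfl
  rw [lhs, mid, rhs]

lemma p_assoc (i j n l : Fin (d + 1)) :
    ∑ m, A.p i j m * A.p m n l = ∑ m, A.p j n m * A.p i m l := by
  classical
  obtain ⟨x, y, hl⟩ := A.R_nonempty l
  have e1 : ∀ w : X, (if A.R n w y then A.p i j (A.cls x w) else 0)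
      = ∑ z : X, if (A.R i x z ∧ A.R j z w) ∧ A.R n w y then 1 else 0 := by
    intro w
    by_cases hw : A.R n w y
    · simp only [hw, and_true, if_true]
      rw [← card_filter]
      exact (A.p_card' (A.R_cls x w) _ fun z => Iff.rfl).symm
    · simp [hw]
  have e2 : ∀ z : X, (if A.R i x z then A.p j n (A.cls z y) else 0)
      = ∑ w : X, if (A.R i x z ∧ A.R j z w) ∧ A.R n w y then 1 else 0 := by
    intro z
    by_cases hz : A.R i x z
    · simp only [hz, true_and, if_true]
      rw [← card_filter]
      exact (A.p_card' (A.R_cls z y) _ fun w => Iff.rfl).symm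
    · simp [hz]
  have key : (∑ w : X, if A.R n w y then A.p i j (A.cls x w) else 0)
      = ∑ z : X, if A.R i x z then A.p j n (A.cls z y) else 0 := by
    rw [Finset.sum_congr rfl fun w _ => e1 w, Finset.sum_congr rfl fun z _ => e2 z]
    exact Finset.sum_comm
  have lhs : (∑ w : X, if A.R n w y then A.p i j (A.cls x w) else 0)
      = ∑ m, A.p i j m * A.p m n l := by
    rw [← Finset.sum_fiberwise univ (fun w => A.cls x w)
      (fun w => if A.R n w y then A.p i j (A.cls x w) else 0)]
    refine Finset.sum_congr rfl fun m _ => ?_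
    have congr1 : ∀ w ∈ univ.filter (fun w => A.cls x w = m),
        (if A.R n w y then A.p i j (A.cls x w) else 0)
        = if A.R n w y then A.p i j m else 0 := fun w hw => by
      rw [(Finset.mem_filter.1 hw).2]
    rw [Finset.sum_congr rfl congr1, ← Finset.sum_filter, Finset.sum_const, smul_eq_mul,
      Finset.filter_filter, mul_comm]
    congr 1
    exact A.p_card' hl _ fun w => and_congr_left fun _ => A.cls_eq_iff
  have rhs : (∑ z : X, if A.R i x z then A.p j n (A.cls z y) else 0)
      = ∑ m, A.p j n m * A.p i m l := by
    rw [← Finset.sum_fiberwise univ (fun z => A.cls z y)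
      (fun z => if A.R i x z then A.p j n (A.cls z y) else 0)]
    refine Finset.sum_congr rfl fun m _ => ?_
    have congr1 : ∀ z ∈ univ.filter (fun z => A.cls z y = m),
        (if A.R i x z then A.p j n (A.cls z y) else 0)
        = if A.R i x z then A.p j n m else 0 := fun z hz => by
      rw [(Finset.mem_filter.1 hz).2]
    rw [Finset.sum_congr rfl congr1, ← Finset.sum_filter, Finset.sum_const, smul_eq_mul,
      Finset.filter_filter, mul_comm]
    congr 1
    refine A.p_card' hl _ fun z => ?_
    rw [and_comm]
    exact and_congr_right fun _ => A.cls_eq_iff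
  rw [← lhs, key, rhs]

lemma p_rotate (i j n : Fin (d + 1)) :
    A.valency (A.star n) * A.p i j (A.star n) = A.valency i * A.p j n (A.star i) := by
  classical
  have h := A.p_assoc i j n 0
  have e1 : ∀ m, A.p i j m * A.p m n 0
      = if m = A.star n then A.p i j m * A.valency m else 0 := by
    intro m
    rw [A.p_zero]
    by_cases hm : m = A.star n
    · rw [if_pos hm, if_pos (by rw [hm, A.star_star])]
    · rw [if_neg (fun hc => hm (by rw [hc, A.star_star])), if_neg hm, mul_zero]
  have e2 : ∀ m, A.p j n m * A.p i m 0
      = if m = A.star i then A.p j n m * A.valency i else 0 := by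
    intro m
    rw [A.p_zero]
    by_cases hm : m = A.star i
    · rw [if_pos hm, if_pos hm]
    · rw [if_neg hm, if_neg hm, mul_zero]
  rw [Finset.sum_congr rfl fun m _ => e1 m, Finset.sum_congr rfl fun m _ => e2 m,
    Finset.sum_ite_eq' univ (A.star n), Finset.sum_ite_eq' univ (A.star i),
    if_pos (Finset.mem_univ _), if_pos (Finset.mem_univ _)] at h
  rw [mul_comm (A.valency (A.star n)), mul_comm (A.valency i), h]

end AssocScheme
theorem case_I_three_J_and_p
    {X : Type*} [Fintype X] {d : ℕ} (A : AssocScheme X d)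
    (hd : 2 ≤ d)
    (hcomm : A.IsCommutative)
    (hgen : A.Generates 1)
    (hns : A.star 1 ≠ 1)
    (h1a : A.prodIdx 1 1 ⊆ {1, A.star 1, 2})
    (h1b : A.prodIdx 1 (A.star 1) ⊆ {0, 1, A.star 1, 2, A.star 2})
    (h1c : (2 : Fin (d + 1)) ≠ A.star 1 ∧ (2 : Fin (d + 1)) ≠ A.star 2)
    (hk : A.valency 1 = A.valency 2)
    (hk1 : 1 < A.valency 1)
    (hI : (A.prodIdx 1 1).ncard = 3) :
    A.prodIdx 1 (A.star 1) = {0, 1, A.star 1, 2, A.star 2} ∧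
    A.p 1 1 2 ≠ A.p 1 (A.star 1) 2 := by
  classical
  have hss1 : A.star (A.star 1) = 1 := A.star_star 1
  have hss2 : A.star (A.star 2) = 2 := A.star_star 2
  -- the index set I = {1, 1*, 2}
  have hIset : A.prodIdx 1 1 = {1, A.star 1, 2} := by
    refine Set.eq_of_subset_of_ncard_le h1a ?_
    rw [hI]
    calc ({1, A.star 1, 2} : Set (Fin (d + 1))).ncard
        ≤ ({A.star 1, 2} : Set (Fin (d + 1))).ncard + 1 := Set.ncard_insert_le _ _
      _ ≤ (({2} : Set (Fin (d + 1))).ncard + 1) + 1 :=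
          Nat.add_le_add_right (Set.ncard_insert_le _ _) 1
      _ ≤ 3 := by rw [Set.ncard_singleton]
  have h3card : ({1, A.star 1, 2} : Set (Fin (d + 1))).ncard = 3 := by rw [← hIset, hI]
  -- distinctness of the five indices
  have h12 : (1 : Fin (d + 1)) ≠ 2 := by
    intro h
    have he : ({1, A.star 1, 2} : Set (Fin (d + 1))) = {A.star 1, 2} := by
      rw [h]
      exact Set.insert_eq_self.2 (by simp)
    rw [he] at h3card
    have h4 := Set.ncard_insert_le (A.star 1) ({2} : Set (Fin (d + 1)))
    rw [Set.ncard_singleton, h3card] at h4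
    omega
  have h1s1 : (1 : Fin (d + 1)) ≠ A.star 1 := Ne.symm hns
  have hs12 : A.star 1 ≠ 2 := Ne.symm h1c.1
  have h2s2 : (2 : Fin (d + 1)) ≠ A.star 2 := h1c.2
  have h01 : (0 : Fin (d + 1)) ≠ 1 := by
    intro h
    exact hns (by rw [← h, A.star_zero, h])
  have h02 : (0 : Fin (d + 1)) ≠ 2 := by
    intro h
    exact h1c.2 (by rw [← h, A.star_zero, h])
  have h0s1 : (0 : Fin (d + 1)) ≠ A.star 1 := by
    intro h
    exact h01 (by rw [← A.star_zero, h, hss1])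
  have h0s2 : (0 : Fin (d + 1)) ≠ A.star 2 := by
    intro h
    exact h02 (by rw [← A.star_zero, h, hss2])
  have h1s2 : (1 : Fin (d + 1)) ≠ A.star 2 := by
    intro h
    exact hs12 (by rw [h]; exact hss2)
  have hs1s2 : A.star 1 ≠ A.star 2 := by
    intro h
    exact h12 (by rw [← hss1, h, hss2])
  -- nonvanishing on I
  have memI : ∀ m : Fin (d + 1),
      A.p 1 1 m ≠ 0 ↔ m ∈ ({1, A.star 1, 2} : Set (Fin (d + 1))) := fun m => by
    rw [← hIset]; rfl
  have ha : A.p 1 1 1 ≠ 0 := (memI 1).2 (by simp)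
  have hb : A.p 1 1 (A.star 1) ≠ 0 := (memI _).2 (by simp)
  have hc : A.p 1 1 2 ≠ 0 := (memI 2).2 (by simp)
  have hvan1 : ∀ m : Fin (d + 1), m ≠ 1 → m ≠ A.star 1 → m ≠ 2 → A.p 1 1 m = 0 := by
    intro m hm1 hm2 hm3
    by_contra h
    have := (memI m).1 h
    simp [hm1, hm2, hm3] at this
  have hvanJ : ∀ m : Fin (d + 1), m ≠ 0 → m ≠ 1 → m ≠ A.star 1 → m ≠ 2 → m ≠ A.star 2 →
      A.p 1 (A.star 1) m = 0 := by
    intro m h0 h1 h2 h3 h4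
    by_contra h
    have := h1b (show m ∈ A.prodIdx 1 (A.star 1) from h)
    simp [h0, h1, h2, h3, h4] at this
  -- valencies
  have kpos : 0 < A.valency 1 := by omega
  have hv1' : A.valency (A.star 1) = A.valency 1 := A.valency_star 1
  have hv2 : A.valency 2 = A.valency 1 := hk.symm
  have hvs2 : A.valency (A.star 2) = A.valency 1 := (A.valency_star 2).trans hk.symm
  have hv0 : A.valency (0 : Fin (d + 1)) = 1 := A.valency_zero
  -- individual intersection numbers
  have T1 : A.p 1 (A.star 1) 1 = A.p 1 (A.star 1) (A.star 1) := by
    have h := A.p_transpose 1 (A.star 1) 1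
    rwa [hss1] at h
  have T2 : A.p 1 (A.star 1) 2 = A.p 1 (A.star 1) (A.star 2) := by
    have h := A.p_transpose 1 (A.star 1) 2
    rwa [hss1] at h
  have T3 : A.p (A.star 1) (A.star 1) 1 = A.p 1 1 (A.star 1) := by
    have h := A.p_transpose (A.star 1) (A.star 1) 1
    rwa [hss1] at h
  have R1 : A.p 1 (A.star 1) (A.star 1) = A.p 1 1 1 := by
    have h := A.p_rotate 1 1 (A.star 1)
    rw [hss1] at h
    exact (Nat.eq_of_mul_eq_mul_left kpos h).symm
  have P1s1_1 : A.p 1 (A.star 1) 1 = A.p 1 1 1 := T1.trans R1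
  have R2 : A.p 1 2 1 = A.p 1 (A.star 1) 2 := by
    have h := A.p_rotate (A.star 2) (A.star 1) 1
    rw [hss2, hv1', hvs2] at h
    have ht : A.p (A.star 2) (A.star 1) (A.star 1) = A.p 1 2 1 := by
      have h2 := A.p_transpose (A.star 2) (A.star 1) (A.star 1)
      rwa [hss1, hss2] at h2
    rw [ht, hcomm (A.star 1) 1 2] at h
    exact Nat.eq_of_mul_eq_mul_left kpos h
  have R3 : A.p 1 (A.star 2) 1 = A.p 1 (A.star 1) 2 := by
    have ht : A.p 1 (A.star 2) 1 = A.p 2 (A.star 1) (A.star 1) := by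
      have h2 := A.p_transpose 1 (A.star 2) 1
      rwa [hss2] at h2
    have h := A.p_rotate 2 (A.star 1) 1
    rw [hv1', hv2, hcomm (A.star 1) 1 (A.star 2), ← T2] at h
    rw [ht]
    exact Nat.eq_of_mul_eq_mul_left kpos h
  have R4 : A.p 2 (A.star 1) 1 = A.p 1 1 2 := by
    have h := A.p_rotate 2 (A.star 1) (A.star 1)
    rw [hss1, hv2] at h
    have ht : A.p (A.star 1) (A.star 1) (A.star 2) = A.p 1 1 2 := by
      have h2 := A.p_transpose (A.star 1) (A.star 1) (A.star 2)
      rwa [hss1, hss2] at h2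
    rw [ht] at h
    exact Nat.eq_of_mul_eq_mul_left kpos h
  have P0 : A.p 1 (A.star 1) 0 = A.valency 1 := rfl
  have P101 : A.p 1 0 1 = 1 := by rw [A.p_id, if_pos rfl]
  -- the valency sum over R1 R1
  have EA : A.p 1 1 1 + A.p 1 1 (A.star 1) + A.p 1 1 2 = A.valency 1 := by
    have h := A.sum_p_mul_valency 1 1
    have hres : ∑ l, A.valency l * A.p 1 1 l
        = ∑ l ∈ ({1, A.star 1, 2} : Finset (Fin (d + 1))), A.valency l * A.p 1 1 l := by
      refine (Finset.sum_subset (Finset.subset_univ _) ?_).symm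
      intro l _ hl
      simp only [Finset.mem_insert, Finset.mem_singleton, not_or] at hl
      rw [hvan1 l hl.1 hl.2.1 hl.2.2, mul_zero]
    rw [hres, Finset.sum_insert (by simp [h1s1, h12]), Finset.sum_insert (by simp [hs12]),
      Finset.sum_singleton, hv1', hv2] at h
    have h' : A.valency 1 * (A.p 1 1 1 + A.p 1 1 (A.star 1) + A.p 1 1 2)
        = A.valency 1 * A.valency 1 := by rw [← h]; ring
    exact Nat.eq_of_mul_eq_mul_left kpos h'
  -- the valency sum over R1 R1*
  have EB : 1 + 2 * A.p 1 1 1 + 2 * A.p 1 (A.star 1) 2 = A.valency 1 := by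
    have h := A.sum_p_mul_valency 1 (A.star 1)
    rw [hv1'] at h
    have hres : ∑ l, A.valency l * A.p 1 (A.star 1) l
        = ∑ l ∈ ({0, 1, A.star 1, 2, A.star 2} : Finset (Fin (d + 1))),
            A.valency l * A.p 1 (A.star 1) l := by
      refine (Finset.sum_subset (Finset.subset_univ _) ?_).symm
      intro l _ hl
      simp only [Finset.mem_insert, Finset.mem_singleton, not_or] at hl
      rw [hvanJ l hl.1 hl.2.1 hl.2.2.1 hl.2.2.2.1 hl.2.2.2.2, mul_zero]
    rw [hres, Finset.sum_insert (by simp [h01, h0s1, h02, h0s2]),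
      Finset.sum_insert (by simp [h1s1, h12, h1s2]),
      Finset.sum_insert (by simp [hs12, hs1s2]),
      Finset.sum_insert (by simp [h2s2]), Finset.sum_singleton,
      hv0, hv1', hv2, hvs2, P0, P1s1_1, R1, ← T2] at h
    have h' : A.valency 1 * (1 + 2 * A.p 1 1 1 + 2 * A.p 1 (A.star 1) 2)
        = A.valency 1 * A.valency 1 := by rw [← h]; ring
    exact Nat.eq_of_mul_eq_mul_left kpos h'
  -- the associativity relation (coefficient of R1 in (R1R1)R1* = R1(R1R1*))
  have EC : A.p 1 1 1 * A.p 1 1 1 + A.p 1 1 (A.star 1) * A.p 1 1 (A.star 1)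
        + A.p 1 1 2 * A.p 1 1 2
      = A.valency 1 + 2 * (A.p 1 1 1 * A.p 1 1 1)
        + 2 * (A.p 1 (A.star 1) 2 * A.p 1 (A.star 1) 2) := by
    have h := A.p_assoc 1 1 (A.star 1) 1
    have hresL : ∑ m, A.p 1 1 m * A.p m (A.star 1) 1
        = ∑ m ∈ ({1, A.star 1, 2} : Finset (Fin (d + 1))),
            A.p 1 1 m * A.p m (A.star 1) 1 := by
      refine (Finset.sum_subset (Finset.subset_univ _) ?_).symm
      intro m _ hm
      simp only [Finset.mem_insert, Finset.mem_singleton, not_or] at hm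
      rw [hvan1 m hm.1 hm.2.1 hm.2.2, zero_mul]
    have hresR : ∑ m, A.p 1 (A.star 1) m * A.p 1 m 1
        = ∑ m ∈ ({0, 1, A.star 1, 2, A.star 2} : Finset (Fin (d + 1))),
            A.p 1 (A.star 1) m * A.p 1 m 1 := by
      refine (Finset.sum_subset (Finset.subset_univ _) ?_).symm
      intro m _ hm
      simp only [Finset.mem_insert, Finset.mem_singleton, not_or] at hm
      rw [hvanJ m hm.1 hm.2.1 hm.2.2.1 hm.2.2.2.1 hm.2.2.2.2, zero_mul]
    rw [hresL, hresR, Finset.sum_insert (by simp [h1s1, h12]),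
      Finset.sum_insert (by simp [hs12]), Finset.sum_singleton,
      Finset.sum_insert (by simp [h01, h0s1, h02, h0s2]),
      Finset.sum_insert (by simp [h1s1, h12, h1s2]),
      Finset.sum_insert (by simp [hs12, hs1s2]),
      Finset.sum_insert (by simp [h2s2]), Finset.sum_singleton,
      P1s1_1, T3, R4, P0, P101, R1, ← T2, R2, R3] at h
    linarith [h]
  -- p_{1,1*}^2 ≠ 0
  have hb1 : 1 ≤ A.p 1 1 (A.star 1) := Nat.one_le_iff_ne_zero.2 hb
  have hc1 : 1 ≤ A.p 1 1 2 := Nat.one_le_iff_ne_zero.2 hc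
  have ha1 : 1 ≤ A.p 1 1 1 := Nat.one_le_iff_ne_zero.2 ha
  have hg : A.p 1 (A.star 1) 2 ≠ 0 := by
    intro hg0
    rw [hg0] at EB EC
    have hbc : A.p 1 1 (A.star 1) + A.p 1 1 2 = 1 + A.p 1 1 1 := by omega
    have f1 : (A.p 1 1 (A.star 1) + A.p 1 1 2) * (A.p 1 1 (A.star 1) + A.p 1 1 2)
        = A.p 1 1 (A.star 1) * A.p 1 1 (A.star 1) + A.p 1 1 2 * A.p 1 1 2
          + 2 * (A.p 1 1 (A.star 1) * A.p 1 1 2) := by ring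
    have f2 : (1 + A.p 1 1 1) * (1 + A.p 1 1 1)
        = 1 + 2 * A.p 1 1 1 + A.p 1 1 1 * A.p 1 1 1 := by ring
    have f3 : (A.p 1 1 (A.star 1) + A.p 1 1 2) * (A.p 1 1 (A.star 1) + A.p 1 1 2)
        = (1 + A.p 1 1 1) * (1 + A.p 1 1 1) := by rw [hbc]
    have hbc1 : 1 ≤ A.p 1 1 (A.star 1) * A.p 1 1 2 := by
      have := Nat.mul_le_mul hb1 hc1
      simpa using this
    simp only [Nat.mul_zero, Nat.zero_mul, Nat.add_zero] at EC
    linarith [f1, f2, f3, hbc1, EB, EC]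
  -- p_{1,1}^2 ≠ p_{1,1*}^2
  have hcg : A.p 1 1 2 ≠ A.p 1 (A.star 1) 2 := by
    intro hE
    rw [← hE] at EB EC
    have hbv : A.p 1 1 (A.star 1) = 1 + A.p 1 1 1 + A.p 1 1 2 := by omega
    have f1 : (1 + A.p 1 1 1 + A.p 1 1 2) * (1 + A.p 1 1 1 + A.p 1 1 2)
        = 1 + A.p 1 1 1 * A.p 1 1 1 + A.p 1 1 2 * A.p 1 1 2 + 2 * A.p 1 1 1
          + 2 * A.p 1 1 2 + 2 * (A.p 1 1 1 * A.p 1 1 2) := by ring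
    have f2 : A.p 1 1 (A.star 1) * A.p 1 1 (A.star 1)
        = (1 + A.p 1 1 1 + A.p 1 1 2) * (1 + A.p 1 1 1 + A.p 1 1 2) := by rw [hbv]
    have hac1 : 1 ≤ A.p 1 1 1 * A.p 1 1 2 := by
      have := Nat.mul_le_mul ha1 hc1
      simpa using this
    linarith [f1, f2, hac1, EB, EC]
  refine ⟨?_, hcg⟩
  refine Set.Subset.antisymm h1b ?_
  intro m hm
  simp only [Set.mem_insert_iff, Set.mem_singleton_iff] at hm
  rcases hm with rfl | rfl | rfl | rfl | rfl
  · show A.p 1 (A.star 1) 0 ≠ 0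
    rw [P0]
    omega
  · show A.p 1 (A.star 1) 1 ≠ 0
    rw [P1s1_1]
    exact ha
  · show A.p 1 (A.star 1) (A.star 1) ≠ 0
    rw [R1]
    exact ha
  · exact hg
  · show A.p 1 (A.star 1) (A.star 2) ≠ 0
    rw [← T2]
    exact hg
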